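/- Let X ⊂ P^r be an integral and non-degenerate projective variety over an algebraically closed field of characteristic zero, b ≥ 2, and q ∈ P^r. Suppose Z and A are zero-dimensional subschemes of X with Z ≠ A, q ∈ ⟨Z⟩ ∩ ⟨A⟩, q ∉ ⟨Z'⟩ for every proper subscheme Z' ⊊ Z, and q ∉ ⟨A'⟩ for every proper subscheme A' ⊊ A. Then h^1(P^r, I_{Z∪A}(1)) > 0. -/

import Mathlib

/- Common framework: projective space over a field as `Projectivization`,
Zariski-closed subsets cut out by homogeneous polynomials, dimension via Krull
dimension of chains of irreducible closed subsets, linear spans, X-rank,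
secant varieties, embedded (Zariski) tangent spaces, smooth locus, tangential
variety, joins, genericity, and zero-dimensional scheme data. -/

open scoped BigOperators

noncomputable section

namespace SecantPaper

variable (K : Type) [Field K] (ι : Type) [Fintype ι] [DecidableEq ι]

/-- Projective space `ℙ^{#ι - 1}` over `K`. -/
abbrev Pj := Projectivization K (ι → K)

variable {K ι}

/-- A polynomial vanishes at a projective point (tested on the chosen representative;
for homogeneous polynomials this is representative-independent). -/
def vanishAt (f : MvPolynomial ι K) (q : Pj K ι) : Prop :=
  MvPolynomial.eval q.rep f = 0

/-- Zariski-closed subsets: common zero loci of families of homogeneous polynomials. -/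
def IsZClosed (C : Set (Pj K ι)) : Prop :=
  ∃ F : Set (MvPolynomial ι K), (∀ f ∈ F, ∃ d, f.IsHomogeneous d) ∧
    C = {q | ∀ f ∈ F, vanishAt f q}

/-- Zariski closure. -/
def zClosure (S : Set (Pj K ι)) : Set (Pj K ι) :=
  ⋂₀ {C | IsZClosed C ∧ S ⊆ C}

/-- Irreducibility with respect to Zariski-closed subsets. -/
def IsZIrred (S : Set (Pj K ι)) : Prop :=
  S.Nonempty ∧ ∀ C₁ C₂ : Set (Pj K ι), IsZClosed C₁ → IsZClosed C₂ →
    S ⊆ C₁ ∪ C₂ → S ⊆ C₁ ∨ S ⊆ C₂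

/-- Dimension of a subset of projective space: Krull dimension of the poset of
irreducible Zariski-closed subsets contained in it. -/
def zdim (S : Set (Pj K ι)) : WithBot ℕ∞ :=
  Order.krullDim {C : Set (Pj K ι) // IsZClosed C ∧ IsZIrred C ∧ C ⊆ S}

/-- The linear subspace (affine cone of the linear span) generated by a set of
projective points. -/
def projSubmodule (S : Set (Pj K ι)) : Submodule K (ι → K) :=
  Submodule.span K (Projectivization.rep '' S)

/-- Linear span of a set of projective points, as a subset of projective space. -/
def projSpan (S : Set (Pj K ι)) : Set (Pj K ι) :=
  {q | q.rep ∈ projSubmodule S}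

/-- Non-degeneracy: the set spans the whole projective space. -/
def Nondegenerate (X : Set (Pj K ι)) : Prop :=
  projSubmodule X = ⊤

/-- The `X`-rank of a point `q`: minimal cardinality of a finite subset of `X`
whose linear span contains `q`. -/
def xRank (X : Set (Pj K ι)) (q : Pj K ι) : ℕ :=
  sInf {k | ∃ S : Finset (Pj K ι), ↑S ⊆ X ∧ S.card = k ∧ q ∈ projSpan (S : Set (Pj K ι))}

/-- The `s`-secant variety of `X`. -/
def secantVariety (X : Set (Pj K ι)) (s : ℕ) : Set (Pj K ι) :=
  zClosure (⋃ S ∈ {S : Finset (Pj K ι) | ↑S ⊆ X ∧ S.card = s}, projSpan (S : Set (Pj K ι)))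

/-- The affine cone of the embedded (Zariski) tangent space of `X` at `p`:
common kernel of the differentials at `p` of all homogeneous polynomials
vanishing on `X`. -/
def tangentSubmodule (X : Set (Pj K ι)) (p : Pj K ι) : Submodule K (ι → K) :=
  ⨅ f ∈ {f : MvPolynomial ι K | (∃ d, f.IsHomogeneous d) ∧ ∀ q ∈ X, vanishAt f q},
    LinearMap.ker (∑ i : ι,
      MvPolynomial.eval p.rep (MvPolynomial.pderiv i f) • (LinearMap.proj i : ((ι → K) →ₗ[K] K)))

/-- The embedded projective tangent space `T_p X ⊆ ℙ^r`. -/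
def projTangent (X : Set (Pj K ι)) (p : Pj K ι) : Set (Pj K ι) :=
  {q | q.rep ∈ tangentSubmodule X p}

/-- Smooth locus: points where the embedded tangent space has minimal dimension. -/
def smoothLocus (X : Set (Pj K ι)) : Set (Pj K ι) :=
  {p ∈ X | ∀ q ∈ X,
    Module.finrank K (tangentSubmodule X p) ≤ Module.finrank K (tangentSubmodule X q)}

/-- The tangential variety `τ(X)`: closure of the union of the embedded tangent
spaces at smooth points. -/
def tangentialVariety (X : Set (Pj K ι)) : Set (Pj K ι) :=
  zClosure (⋃ p ∈ smoothLocus X, projTangent X p)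

/-- Join of two subvarieties: closure of the union of lines joining their points. -/
def joinVar (A B : Set (Pj K ι)) : Set (Pj K ι) :=
  zClosure {q | ∃ a ∈ A, ∃ b ∈ B, q ∈ projSpan {a, b}}

/-- Iterated join of `τ(X)` with copies of `X`. -/
def tauJoinAux (X : Set (Pj K ι)) : ℕ → Set (Pj K ι)
  | 0 => tangentialVariety X
  | k + 1 => joinVar (tauJoinAux X k) X

/-- `τ(X,b)`: the join of one copy of `τ(X)` and `b - 2` copies of `X`. -/
def tauJoin (X : Set (Pj K ι)) (b : ℕ) : Set (Pj K ι) :=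
  tauJoinAux X (b - 2)

/-- A property holds for a general point of `T`: it holds on the complement in `T`
of the zero locus of some polynomial not vanishing identically on `T`. -/
def genericP (T : Set (Pj K ι)) (P : Pj K ι → Prop) : Prop :=
  ∃ f : MvPolynomial ι K, (∃ q ∈ T, ¬ vanishAt f q) ∧ ∀ q ∈ T, ¬ vanishAt f q → P q

/-- Vanishing of a polynomial in `m` groups of variables at an `m`-tuple of
projective points. -/
def tVanish {m : ℕ} (f : MvPolynomial (Fin m × ι) K) (z : Fin m → Pj K ι) : Prop :=
  MvPolynomial.eval (fun p => (z p.1).rep p.2) f = 0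

/-- A property holds for a general `m`-tuple in a parameter set `T`. -/
def genericT {m : ℕ} (T : Set (Fin m → Pj K ι)) (P : (Fin m → Pj K ι) → Prop) : Prop :=
  ∃ f : MvPolynomial (Fin m × ι) K,
    (∃ z ∈ T, ¬ tVanish f z) ∧ ∀ z ∈ T, ¬ tVanish f z → P z

/-- Data of an element of `𝒵(X,b)`: a connected degree-2 scheme `v` supported at a
smooth point `o` (recorded by the tangent direction `t ∈ T_o X`, `t ≠ o`, so that
`⟨v⟩` is the line through `o` and `t`) together with `b - 2` further distinct
points of `X`. -/
def ZData (X : Set (Pj K ι)) (b : ℕ) (o t : Pj K ι) (S : Finset (Pj K ι)) : Prop :=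
  o ∈ smoothLocus X ∧ t ∈ projTangent X o ∧ t ≠ o ∧ ↑S ⊆ X ∧ o ∉ S ∧ S.card + 2 = b

/-- The linear span `⟨Z⟩` of the degree-`b` scheme `Z = v ∪ {p_1, …, p_{b-2}}`. -/
def zSpan (o t : Pj K ι) (S : Finset (Pj K ι)) : Set (Pj K ι) :=
  projSpan (insert o (insert t (S : Set (Pj K ι))))

/-- `♯(𝒵(X,b,q)) = 1`: there is a scheme `Z ∈ 𝒵(X,b)` with `q ∈ ⟨Z⟩`, and it is
unique as a scheme (same support point `o`, same reduced points, same tangent line). -/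
def uniqueZ (X : Set (Pj K ι)) (b : ℕ) (q : Pj K ι) : Prop :=
  ∃ o t S, ZData X b o t S ∧ q ∈ zSpan o t S ∧
    ∀ o' t' S', ZData X b o' t' S' → q ∈ zSpan o' t' S' →
      o = o' ∧ S = S' ∧ projSpan {o, t} = projSpan ({o', t'} : Set (Pj K ι))

/-- Parameter space for schemes in `𝒵(X, m+2)`: tuples `(o, t, p_1, …, p_m)`. -/
def ZParam (X : Set (Pj K ι)) (m : ℕ) : Set (Fin (m + 2) → Pj K ι) :=
  {z | z 0 ∈ smoothLocus X ∧ z 1 ∈ projTangent X (z 0) ∧ z 1 ≠ z 0 ∧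
    (∀ i : Fin (m + 2), 2 ≤ (i : ℕ) → z i ∈ X ∧ z i ≠ z 0) ∧
    ∀ i j : Fin (m + 2), 2 ≤ (i : ℕ) → 2 ≤ (j : ℕ) → z i = z j → i = j}

/-- Parameter space of tangent lines: pairs `(p, t)` with `p` a smooth point of `X`
and `t ≠ p` a point of the embedded tangent space, so the line is `⟨{p, t}⟩`. -/
def TangentLineParam (X : Set (Pj K ι)) : Set (Fin 2 → Pj K ι) :=
  {z | z 0 ∈ smoothLocus X ∧ z 1 ∈ projTangent X (z 0) ∧ z 1 ≠ z 0}

/-- `X` is tangentially degenerate if it is NOT the case that a general tangent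
line at a general smooth point meets `X` only at the point of tangency. -/
def TangentiallyDegenerate (X : Set (Pj K ι)) : Prop :=
  ¬ genericT (TangentLineParam X)
      (fun z => ∀ y ∈ X, y ∈ projSpan {z 0, z 1} → y = z 0)

/-- `X` is (scheme-theoretically) cut out by quadrics: it is the common zero locus
of the quadrics containing it, and these quadrics cut out its Zariski tangent
spaces. -/
def CutByQuadrics (X : Set (Pj K ι)) : Prop :=
  (∀ q : Pj K ι,
      (∀ f : MvPolynomial ι K, f.IsHomogeneous 2 → (∀ x ∈ X, vanishAt f x) → vanishAt f q)
      → q ∈ X) ∧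
  ∀ p ∈ X, ∀ w : ι → K,
    (∀ f : MvPolynomial ι K, f.IsHomogeneous 2 → (∀ x ∈ X, vanishAt f x) →
      (∑ i : ι, MvPolynomial.eval p.rep (MvPolynomial.pderiv i f) * w i) = 0) →
    w ∈ tangentSubmodule X p

/-- The closure of the image of `X` under the rational map to `ℙ(κ)` given by the
coordinate functions `A`. -/
def imageVariety {κ : Type} [Fintype κ] [DecidableEq κ]
    (X : Set (Pj K ι)) (A : Pj K ι → (κ → K)) : Set (Pj K κ) :=
  zClosure {p | ∃ x ∈ X, ∃ h : A x ≠ 0, p = Projectivization.mk K (A x) h}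

/-- The degree-1 polynomial associated to a linear functional. -/
def dualToPoly (φ : Module.Dual K (ι → K)) : MvPolynomial ι K :=
  ∑ i : ι, φ (Pi.single i 1) • MvPolynomial.X i

/-- The homogeneous ideal of a subset `X` of projective space. -/
def homIdeal (X : Set (Pj K ι)) : Ideal (MvPolynomial ι K) :=
  Ideal.span {f | (∃ d, f.IsHomogeneous d) ∧ ∀ q ∈ X, vanishAt f q}

/-- The irrelevant-free ideal of linear forms vanishing at a point. -/
def ptIdeal (o : Pj K ι) : Ideal (MvPolynomial ι K) :=
  Ideal.span {f | f.IsHomogeneous 1 ∧ vanishAt f o}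

/-- Local (at `o`) membership in an ideal: membership after multiplying by some
homogeneous polynomial not vanishing at `o` (i.e. membership in the localization). -/
def locMem (f : MvPolynomial ι K) (I : Ideal (MvPolynomial ι K)) (o : Pj K ι) : Prop :=
  ∃ g : MvPolynomial ι K, (∃ d, g.IsHomogeneous d) ∧ ¬ vanishAt g o ∧ g * f ∈ I

/-- Common kernel of a set of linear functionals. -/
def dualZero (D : Set (Module.Dual K (ι → K))) : Submodule K (ι → K) :=
  ⨅ φ ∈ D, LinearMap.ker φ

/-- An ideal is homogeneous. -/
def IdealHomog (I : Ideal (MvPolynomial ι K)) : Prop :=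
  ∀ f ∈ I, ∀ d : ℕ, MvPolynomial.homogeneousComponent d f ∈ I

/-- An ideal is saturated with respect to the irrelevant maximal ideal. -/
def IdealSaturated (I : Ideal (MvPolynomial ι K)) : Prop :=
  ∀ f : MvPolynomial ι K, (∀ i : ι, MvPolynomial.X i * f ∈ I) → f ∈ I

/-- Projective zero locus of an ideal. -/
def zeroLocusI (I : Ideal (MvPolynomial ι K)) : Set (Pj K ι) :=
  {q | ∀ f ∈ I, vanishAt f q}

/-- `I` is the saturated homogeneous ideal of a zero-dimensional closed subscheme of `X`. -/
def SchemeIdeal (X : Set (Pj K ι)) (I : Ideal (MvPolynomial ι K)) : Prop :=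
  IdealHomog I ∧ IdealSaturated I ∧ homIdeal X ≤ I ∧ (zeroLocusI I).Finite

/-- Membership in the saturation of `I` (for ideals with finite zero locus):
local membership at every point of the zero locus. -/
def satMem (f : MvPolynomial ι K) (I : Ideal (MvPolynomial ι K)) : Prop :=
  ∀ q ∈ zeroLocusI I, locMem f I q

/-- The affine cone of the linear span of the subscheme with ideal `I`. -/
def linSpanI (I : Ideal (MvPolynomial ι K)) : Submodule K (ι → K) :=
  dualZero {φ | dualToPoly φ ∈ I}

/-- Dimension of the degree-`d` graded piece of an ideal. -/
def gradedDim (I : Ideal (MvPolynomial ι K)) (d : ℕ) : ℕ :=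
  Module.finrank K
    ↥((MvPolynomial.homogeneousSubmodule ι K d) ⊓ (Submodule.restrictScalars K I))

/-- Dimension of the degree-`d` graded piece of the quotient by an ideal. -/
def gradedQuotDim (I : Ideal (MvPolynomial ι K)) (d : ℕ) : ℕ :=
  Module.finrank K ↥(MvPolynomial.homogeneousSubmodule ι K d) - gradedDim I d

end SecantPaper

/-!
Let `Q = I ⊓ J` be the ideal of `Z ∪ A` and choose a linear form `L` vanishing at no point of
`Z ∪ A`. Modulo a saturated homogeneous ideal `L` is a nonzerodivisor, so the Hilbert function of
`R ⧸ Q` is non-decreasing; by the Nullstellensatz multiplication by `L` is onto in large degrees, so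
it is eventually constant, with value `D = deg (Z ∪ A)`. If `Z ∪ A` imposed `D` conditions on
hyperplanes, the Hilbert function would be constant from degree `1` on, so multiplication by `L`
would be bijective modulo `Q`, hence onto modulo `I`, `J` and `I + J`, and by Mayer–Vietoris also
one-to-one modulo `I + J` in every degree `d ≥ 1`. Then the saturation `W` of `I + J` (the scheme
`Z ∩ A`) has the same linear forms as `I + J`, whence `q ∈ ⟨Z⟩ ∩ ⟨A⟩ ⊆ ⟨W⟩`. As `W ⊆ Z` and
`W ⊆ A`, with one inclusion proper because `Z ≠ A`, this contradicts the minimality of `Z` or of `A`.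
-/

open MvPolynomial

namespace MvPolynomial

attribute [local instance] gradedAlgebra

variable {R σ : Type*} [CommSemiring R]

theorem coe_decompose_eq_homogeneousComponent (f : MvPolynomial σ R) (n : ℕ) :
    (DirectSum.decompose (homogeneousSubmodule σ R) f n : MvPolynomial σ R) =
      homogeneousComponent n f :=
  decomposition.decompose'_apply f n

theorem homogeneousComponent_add_mul {f : MvPolynomial σ R} {d : ℕ}
    (hf : f ∈ homogeneousSubmodule σ R d) (g : MvPolynomial σ R) (n : ℕ) :
    homogeneousComponent (n + d) (g * f) = homogeneousComponent n g * f := by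
  rw [← coe_decompose_eq_homogeneousComponent,
    DirectSum.coe_decompose_mul_of_right_mem_of_le _ hf (by omega), Nat.add_sub_cancel,
    coe_decompose_eq_homogeneousComponent]

theorem IsHomogeneous.eval_smul {f : MvPolynomial σ R} {n : ℕ} (hf : f.IsHomogeneous n)
    (c : R) (x : σ → R) : eval (c • x) f = c ^ n * eval x f := by
  simp only [eval_eq, Finset.mul_sum]
  refine Finset.sum_congr rfl fun d hd => ?_
  have hdeg : ∑ i ∈ d.support, d i = n := by
    rw [← Finsupp.degree_apply, Finsupp.degree_eq_weight_one]
    exact hf (mem_support_iff.mp hd)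
  simp only [Pi.smul_apply, smul_eq_mul, mul_pow, Finset.prod_mul_distrib,
    Finset.prod_pow_eq_pow_sum, hdeg]
  ring

theorem homogeneousSubmodule_le_span_X_pow (n : ℕ) :
    homogeneousSubmodule σ R n ≤ (Ideal.span (Set.range X) ^ n).restrictScalars R := by
  induction n with
  | zero => simp
  | succ n ih =>
    intro f hf
    rw [← homogeneousSubmodule_one_pow, pow_succ, homogeneousSubmodule_one_pow] at hf
    refine Submodule.mul_induction_on hf (fun g hg l hl => ?_) (fun _ _ => add_mem)
    rw [homogeneousSubmodule_one_eq_span_X] at hl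
    exact pow_succ (Ideal.span (Set.range (X : σ → MvPolynomial σ R))) n ▸
      Ideal.mul_mem_mul (ih hg) (Submodule.span_le_restrictScalars R _ _ hl)

end MvPolynomial

theorem Monotone.eq_of_le_of_eventually_eq {α : Type*} [PartialOrder α] {f : ℕ → α}
    (hf : Monotone f) {N a : ℕ} (hN : ∀ d, N ≤ d → f d = f N) (ha : f N ≤ f a) {d : ℕ}
    (hd : a ≤ d) : f d = f N :=
  le_antisymm ((hf (le_max_left d N)).trans (hN _ (le_max_right d N)).le) (ha.trans (hf hd))

namespace SecantPaper

section

attribute [local instance] gradedAlgebra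

variable {K : Type} [Field K] {ι : Type}

local notation "𝒜" => homogeneousSubmodule ι K

theorem idealHomog_iff_isHomogeneous {A : Ideal (MvPolynomial ι K)} :
    IdealHomog A ↔ A.IsHomogeneous 𝒜 :=
  ⟨fun h i r hr => coe_decompose_eq_homogeneousComponent r i ▸ h r hr i,
    fun h r hr i => coe_decompose_eq_homogeneousComponent r i ▸ h i hr⟩

theorem IdealHomog.inf {A B : Ideal (MvPolynomial ι K)} (hA : IdealHomog A) (hB : IdealHomog B) :
    IdealHomog (A ⊓ B) :=
  fun f hf d => ⟨hA f hf.1 d, hB f hf.2 d⟩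

theorem IdealHomog.sup {A B : Ideal (MvPolynomial ι K)} (hA : IdealHomog A) (hB : IdealHomog B) :
    IdealHomog (A ⊔ B) :=
  idealHomog_iff_isHomogeneous.mpr
    ((idealHomog_iff_isHomogeneous.mp hA).sup (idealHomog_iff_isHomogeneous.mp hB))

theorem IdealHomog.colon_singleton {A : Ideal (MvPolynomial ι K)} (hA : IdealHomog A)
    {f : MvPolynomial ι K} {d : ℕ} (hf : f ∈ 𝒜 d) : IdealHomog (A.colon {f}) := by
  intro g hg e
  rw [Submodule.mem_colon_singleton, smul_eq_mul] at hg ⊢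
  rw [← homogeneousComponent_add_mul hf]
  exact hA _ hg _

theorem IdealSaturated.inf {A B : Ideal (MvPolynomial ι K)} (hA : IdealSaturated A)
    (hB : IdealSaturated B) : IdealSaturated (A ⊓ B) :=
  fun f hf => ⟨hA f fun i => (hf i).1, hB f fun i => (hf i).2⟩

theorem zeroLocusI_anti {A B : Ideal (MvPolynomial ι K)} (h : A ≤ B) :
    zeroLocusI B ⊆ zeroLocusI A :=
  fun _ hP f hf => hP f (h hf)

theorem zeroLocusI_inf_subset (A B : Ideal (MvPolynomial ι K)) :
    zeroLocusI (A ⊓ B) ⊆ zeroLocusI A ∪ zeroLocusI B := by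
  intro P hP
  by_contra! h
  simp only [Set.mem_union, zeroLocusI, vanishAt, Set.mem_ofPred_eq, not_or, not_forall] at h
  obtain ⟨⟨f, hf, hfP⟩, ⟨g, hg, hgP⟩⟩ := h
  exact mul_ne_zero hfP hgP
    (by simpa [vanishAt] using hP (f * g) ⟨A.mul_mem_right g hf, B.mul_mem_left f hg⟩)

theorem vanishAt_mk_of_isHomogeneous {f : MvPolynomial ι K} {n : ℕ} (hf : f.IsHomogeneous n)
    {x : ι → K} (hx : x ≠ 0) (h : eval x f = 0) : vanishAt f (Projectivization.mk K x hx) := by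
  obtain ⟨a, ha⟩ := (Projectivization.mk_eq_mk_iff K _ _ (Projectivization.rep_nonzero _) hx).mp
    (Projectivization.mk_rep _)
  rw [vanishAt, ← ha, Units.smul_def, hf.eval_smul, h, mul_zero]

/-- By the affine Nullstellensatz every `X i` lies in the radical of `A`. -/
theorem exists_homogeneousSubmodule_subset_of_zeroLocusI_eq_empty [IsAlgClosed K] [Finite ι]
    {A : Ideal (MvPolynomial ι K)} (hA : IdealHomog A) (h : zeroLocusI A = ∅) :
    ∃ N, ∀ n, N ≤ n → (𝒜 n : Set (MvPolynomial ι K)) ⊆ A := by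
  have hX : Ideal.span (Set.range X) ≤ A.radical := by
    rw [Ideal.span_le, ← vanishingIdeal_zeroLocus_eq_radical (K := K)]
    rintro _ ⟨i, rfl⟩
    rw [SetLike.mem_coe, mem_vanishingIdeal_iff]
    intro x hx
    by_contra hxi
    have hx0 : x ≠ 0 := fun h0 => by simp [h0] at hxi
    have : Projectivization.mk K x hx0 ∈ zeroLocusI A := fun f hf => by
      rw [vanishAt, ← sum_homogeneousComponent f, map_sum]
      exact Finset.sum_eq_zero fun j _ => vanishAt_mk_of_isHomogeneous
        (homogeneousComponent_isHomogeneous j f) hx0 ((mem_zeroLocus_iff ..).mp hx _ (hA f hf j))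
    simp [h] at this
  obtain ⟨k, hk⟩ := Ideal.exists_pow_le_of_le_radical_of_fg hX
    (Submodule.fg_span (Set.finite_range _))
  exact ⟨k, fun n hn f hf =>
    hk (Ideal.pow_le_pow_right hn (homogeneousSubmodule_le_span_X_pow n hf))⟩

theorem forall_mul_mem_succ {A : Ideal (MvPolynomial ι K)} {f : MvPolynomial ι K} {n : ℕ}
    (h : ∀ g ∈ 𝒜 n, g * f ∈ A) : ∀ g ∈ 𝒜 (n + 1), g * f ∈ A := by
  intro g hg
  rw [← homogeneousSubmodule_one_pow, pow_succ', homogeneousSubmodule_one_pow] at hg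
  refine Submodule.mul_induction_on hg (fun l _ g hg => ?_) (fun _ _ h h' => ?_)
  · rw [mul_assoc]; exact A.mul_mem_left l (h g hg)
  · rw [add_mul]; exact A.add_mem h h'

theorem forall_mul_mem_of_le {A : Ideal (MvPolynomial ι K)} {f : MvPolynomial ι K} {n m : ℕ}
    (h : ∀ g ∈ 𝒜 n, g * f ∈ A) (hnm : n ≤ m) : ∀ g ∈ 𝒜 m, g * f ∈ A := by
  induction m, hnm using Nat.le_induction with
  | base => exact h
  | succ m _ ih => exact forall_mul_mem_succ ih

/-- The saturation `A : (X_i)^∞` of `A` with respect to the irrelevant ideal. -/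
def saturation (A : Ideal (MvPolynomial ι K)) : Ideal (MvPolynomial ι K) where
  carrier := {f | ∃ N, ∀ g ∈ 𝒜 N, g * f ∈ A}
  zero_mem' := ⟨0, fun g _ => by simp⟩
  add_mem' := by
    rintro f f' ⟨N, hN⟩ ⟨N', hN'⟩
    refine ⟨max N N', fun g hg => ?_⟩
    rw [mul_add]
    exact A.add_mem (forall_mul_mem_of_le hN (le_max_left N N') g hg)
      (forall_mul_mem_of_le hN' (le_max_right N N') g hg)
  smul_mem' := by
    rintro c f ⟨N, hN⟩
    exact ⟨N, fun g hg => by simpa [mul_left_comm g c f] using A.mul_mem_left c (hN g hg)⟩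

theorem le_saturation (A : Ideal (MvPolynomial ι K)) : A ≤ saturation A :=
  fun _ hf => ⟨0, fun g _ => A.mul_mem_left g hf⟩

theorem IdealSaturated.saturation_eq {A : Ideal (MvPolynomial ι K)} (hA : IdealSaturated A) :
    saturation A = A := by
  refine le_antisymm (fun _ ⟨N, hN⟩ => ?_) (le_saturation A)
  induction N with
  | zero => simpa using hN 1 (isHomogeneous_one ι K)
  | succ N ih =>
    refine ih fun g hg => hA _ fun i => ?_
    rw [← mul_assoc]
    exact hN _ (add_comm 1 N ▸ (isHomogeneous_X K i).mul hg)

theorem IdealHomog.saturation {A : Ideal (MvPolynomial ι K)} (hA : IdealHomog A) :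
    IdealHomog (saturation A) := by
  rintro f ⟨N, hN⟩ e
  refine ⟨N, fun g hg => ?_⟩
  rw [mul_comm, ← homogeneousComponent_add_mul hg]
  exact hA _ (mul_comm g f ▸ hN g hg) _

theorem idealSaturated_saturation [Finite ι] (A : Ideal (MvPolynomial ι K)) :
    IdealSaturated (saturation A) := by
  intro f hf
  choose N hN using hf
  obtain ⟨M, hM⟩ := Finite.exists_le N
  refine ⟨M + 1, fun g hg => ?_⟩
  rw [← homogeneousSubmodule_one_pow, pow_succ, homogeneousSubmodule_one_pow] at hg
  refine Submodule.mul_induction_on hg (fun g hg l hl => ?_) (fun _ _ h h' => ?_)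
  · have := Fintype.ofFinite ι
    rw [homogeneousSubmodule_one_eq_span_X, Submodule.mem_span_range_iff_exists_fun] at hl
    obtain ⟨c, rfl⟩ := hl
    simp only [Finset.mul_sum, Finset.sum_mul]
    refine A.sum_mem fun i _ => ?_
    rw [mul_smul_comm, smul_mul_assoc, mul_assoc]
    exact Submodule.smul_of_tower_mem A (c i) (forall_mul_mem_of_le (hN i) (hM i) g hg)
  · rw [add_mul]; exact A.add_mem h h'

/-- `L` lies in `A : f`, which therefore has empty zero locus and contains all forms of large
degree. -/
theorem IdealSaturated.mem_of_mul_mem [IsAlgClosed K] [Finite ι] {A : Ideal (MvPolynomial ι K)}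
    (hA : IdealHomog A) (hsat : IdealSaturated A) {L : MvPolynomial ι K}
    (hL : ∀ P ∈ zeroLocusI A, ¬ vanishAt L P) {f : MvPolynomial ι K} {d : ℕ} (hf : f ∈ 𝒜 d)
    (hLf : L * f ∈ A) : f ∈ A := by
  have hAB : A ≤ A.colon {f} := fun g hg => by
    simpa [Submodule.mem_colon_singleton] using A.mul_mem_right f hg
  have hLB : L ∈ A.colon {f} := by simpa [Submodule.mem_colon_singleton] using hLf
  have hB : zeroLocusI (A.colon {f}) = ∅ := Set.eq_empty_of_forall_notMem fun P hP =>
    hL P (zeroLocusI_anti hAB hP) (hP L hLB)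
  obtain ⟨N, hN⟩ := exists_homogeneousSubmodule_subset_of_zeroLocusI_eq_empty
    (hA.colon_singleton hf) hB
  rw [← hsat.saturation_eq]
  exact ⟨N, fun g hg => by simpa [Submodule.mem_colon_singleton] using hN N le_rfl hg⟩

instance [Finite ι] (d : ℕ) : FiniteDimensional K (𝒜 d) :=
  Module.Finite.iff_fg.mpr (homogeneousSubmodule_fg (σ := ι) K d)

def gradedPart (A : Ideal (MvPolynomial ι K)) (d : ℕ) : Submodule K (𝒜 d) :=
  (A.restrictScalars K).comap (𝒜 d).subtype

def hilbertFn (A : Ideal (MvPolynomial ι K)) (d : ℕ) : ℕ :=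
  Module.finrank K (𝒜 d ⧸ gradedPart A d)

theorem gradedPart_inf (A B : Ideal (MvPolynomial ι K)) (d : ℕ) :
    gradedPart (A ⊓ B) d = gradedPart A d ⊓ gradedPart B d :=
  Submodule.ext fun _ => Iff.rfl

theorem gradedPart_sup {A B : Ideal (MvPolynomial ι K)} (hA : IdealHomog A) (hB : IdealHomog B)
    (d : ℕ) : gradedPart (A ⊔ B) d = gradedPart A d ⊔ gradedPart B d := by
  refine le_antisymm (fun f hf => ?_)
    (sup_le (fun _ h => Ideal.mem_sup_left h) (fun _ h => Ideal.mem_sup_right h))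
  obtain ⟨a, ha, b, hb, hab⟩ := Submodule.mem_sup.mp hf
  refine Submodule.mem_sup.mpr ⟨⟨_, homogeneousComponent_mem d a⟩, hA a ha d,
    ⟨_, homogeneousComponent_mem d b⟩, hB b hb d, Subtype.ext ?_⟩
  simp [← map_add, hab, homogeneousComponent_of_mem f.2]

theorem finrank_gradedPart (A : Ideal (MvPolynomial ι K)) (d : ℕ) :
    Module.finrank K (gradedPart A d) = gradedDim A d := by
  have : gradedPart A d = (𝒜 d ⊓ A.restrictScalars K).comap (𝒜 d).subtype := by
    ext f
    simp [gradedPart]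
  rw [this]
  exact (Submodule.comapSubtypeEquivOfLe inf_le_left).finrank_eq

theorem hilbertFn_add_finrank_gradedPart [Finite ι] (A : Ideal (MvPolynomial ι K)) (d : ℕ) :
    hilbertFn A d + Module.finrank K (gradedPart A d) = Module.finrank K (𝒜 d) :=
  Submodule.finrank_quotient_add_finrank _

theorem gradedQuotDim_eq_hilbertFn [Finite ι] (A : Ideal (MvPolynomial ι K)) (d : ℕ) :
    gradedQuotDim A d = hilbertFn A d := by
  have := hilbertFn_add_finrank_gradedPart A d
  rw [finrank_gradedPart] at this
  rw [gradedQuotDim]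
  omega

theorem hilbertFn_inf_add_hilbertFn_sup [Finite ι] {A B : Ideal (MvPolynomial ι K)}
    (hA : IdealHomog A) (hB : IdealHomog B) (d : ℕ) :
    hilbertFn (A ⊓ B) d + hilbertFn (A ⊔ B) d = hilbertFn A d + hilbertFn B d := by
  have hsum := Submodule.finrank_sup_add_finrank_inf_eq (gradedPart A d) (gradedPart B d)
  have h₁ := hilbertFn_add_finrank_gradedPart (A ⊓ B) d
  have h₂ := hilbertFn_add_finrank_gradedPart (A ⊔ B) d
  have h₃ := hilbertFn_add_finrank_gradedPart A d
  have h₄ := hilbertFn_add_finrank_gradedPart B d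
  rw [gradedPart_inf] at h₁
  rw [gradedPart_sup hA hB] at h₂
  omega

def mulQuot (A : Ideal (MvPolynomial ι K)) {L : MvPolynomial ι K} (hL : L ∈ 𝒜 1) (d : ℕ) :
    (𝒜 d ⧸ gradedPart A d) →ₗ[K] (𝒜 (d + 1) ⧸ gradedPart A (d + 1)) :=
  Submodule.mapQ _ _
    ((LinearMap.mulLeft K L).restrict fun _ hf => add_comm 1 d ▸ SetLike.mul_mem_graded hL hf)
    fun _ hf => A.mul_mem_left L hf

theorem mulQuot_mk (A : Ideal (MvPolynomial ι K)) {L : MvPolynomial ι K} (hL : L ∈ 𝒜 1) {d : ℕ}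
    (f : 𝒜 d) : mulQuot A hL d (Submodule.Quotient.mk f) =
      Submodule.Quotient.mk ⟨L * f, add_comm 1 d ▸ SetLike.mul_mem_graded hL f.2⟩ :=
  rfl

theorem mulQuot_injective_iff {A : Ideal (MvPolynomial ι K)} {L : MvPolynomial ι K}
    (hL : L ∈ 𝒜 1) {d : ℕ} :
    Function.Injective (mulQuot A hL d) ↔ ∀ f ∈ 𝒜 d, L * f ∈ A → f ∈ A := by
  rw [← LinearMap.ker_eq_bot, Submodule.eq_bot_iff]
  constructor
  · intro h f hf hLf
    have := h (Submodule.Quotient.mk ⟨f, hf⟩)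
    simp only [LinearMap.mem_ker, mulQuot_mk, Submodule.Quotient.mk_eq_zero] at this
    exact this hLf
  · intro h y hy
    obtain ⟨⟨f, hf⟩, rfl⟩ := Submodule.Quotient.mk_surjective _ y
    simp only [LinearMap.mem_ker, mulQuot_mk, Submodule.Quotient.mk_eq_zero] at hy ⊢
    exact h f hf hy

theorem mulQuot_injective [IsAlgClosed K] [Finite ι] {A : Ideal (MvPolynomial ι K)}
    (hA : IdealHomog A) (hsat : IdealSaturated A) {L : MvPolynomial ι K} (hL : L ∈ 𝒜 1)
    (hLA : ∀ P ∈ zeroLocusI A, ¬ vanishAt L P) (d : ℕ) :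
    Function.Injective (mulQuot A hL d) :=
  (mulQuot_injective_iff hL).mpr fun _ hf => hsat.mem_of_mul_mem hA hLA hf

theorem mulQuot_surjective_of_le {A B : Ideal (MvPolynomial ι K)} (hAB : A ≤ B)
    {L : MvPolynomial ι K} (hL : L ∈ 𝒜 1) {d : ℕ} (h : Function.Surjective (mulQuot A hL d)) :
    Function.Surjective (mulQuot B hL d) := by
  intro y
  obtain ⟨f, rfl⟩ := Submodule.Quotient.mk_surjective _ y
  obtain ⟨x, hx⟩ := h (Submodule.Quotient.mk f)
  obtain ⟨g, rfl⟩ := Submodule.Quotient.mk_surjective _ x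
  rw [mulQuot_mk, Submodule.Quotient.eq] at hx
  exact ⟨Submodule.Quotient.mk g, by rw [mulQuot_mk, Submodule.Quotient.eq]; exact hAB hx⟩

/-- `A + (L)` has empty zero locus, so it contains every form `f` of large degree, and the
homogeneous components of `f = a + h * L` give `f ≡ L * h_d` modulo `A`. -/
theorem exists_mulQuot_surjective [IsAlgClosed K] [Finite ι] {A : Ideal (MvPolynomial ι K)}
    (hA : IdealHomog A) {L : MvPolynomial ι K} (hL : L ∈ 𝒜 1)
    (hLA : ∀ P ∈ zeroLocusI A, ¬ vanishAt L P) :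
    ∃ N, ∀ d, N ≤ d → Function.Surjective (mulQuot A hL d) := by
  have hB : IdealHomog (A ⊔ Ideal.span {L}) := idealHomog_iff_isHomogeneous.mpr <|
    (idealHomog_iff_isHomogeneous.mp hA).sup <|
      Ideal.homogeneous_span _ _ fun _ h => ⟨1, Set.mem_singleton_iff.mp h ▸ hL⟩
  have hB₀ : zeroLocusI (A ⊔ Ideal.span {L}) = ∅ := Set.eq_empty_of_forall_notMem fun P hP =>
    hLA P (zeroLocusI_anti le_sup_left hP)
      (hP L (Ideal.mem_sup_right (Ideal.mem_span_singleton_self L)))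
  obtain ⟨N, hN⟩ := exists_homogeneousSubmodule_subset_of_zeroLocusI_eq_empty hB hB₀
  refine ⟨N, fun d hd y => ?_⟩
  obtain ⟨⟨f, hf⟩, rfl⟩ := Submodule.Quotient.mk_surjective _ y
  obtain ⟨a, ha, _, hb, hab⟩ := Submodule.mem_sup.mp (hN (d + 1) (by omega) hf)
  obtain ⟨h, rfl⟩ := Ideal.mem_span_singleton'.mp hb
  have hf' : homogeneousComponent (d + 1) a + homogeneousComponent d h * L = f := by
    rw [← homogeneousComponent_add_mul hL, ← map_add, hab, homogeneousComponent_of_mem hf,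
      if_pos rfl]
  refine ⟨Submodule.Quotient.mk ⟨_, homogeneousComponent_mem d h⟩, ?_⟩
  rw [mulQuot_mk, Submodule.Quotient.eq]
  simpa [gradedPart, ← hf', mul_comm] using A.neg_mem (hA a ha (d + 1))

theorem hilbertFn_monotone [IsAlgClosed K] [Finite ι] {A : Ideal (MvPolynomial ι K)}
    (hA : IdealHomog A) (hsat : IdealSaturated A) {L : MvPolynomial ι K} (hL : L ∈ 𝒜 1)
    (hLA : ∀ P ∈ zeroLocusI A, ¬ vanishAt L P) : Monotone (hilbertFn A) :=
  monotone_nat_of_le_succ fun d =>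
    LinearMap.finrank_le_finrank_of_injective (mulQuot_injective hA hsat hL hLA d)

theorem hilbertFn_succ_eq [IsAlgClosed K] [Finite ι] {A : Ideal (MvPolynomial ι K)}
    (hA : IdealHomog A) (hsat : IdealSaturated A) {L : MvPolynomial ι K} (hL : L ∈ 𝒜 1)
    (hLA : ∀ P ∈ zeroLocusI A, ¬ vanishAt L P) {d : ℕ}
    (h : Function.Surjective (mulQuot A hL d)) : hilbertFn A (d + 1) = hilbertFn A d :=
  (LinearEquiv.ofBijective _ ⟨mulQuot_injective hA hsat hL hLA d, h⟩).finrank_eq.symm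

theorem exists_hilbertFn_eq [IsAlgClosed K] [Finite ι] {A : Ideal (MvPolynomial ι K)}
    (hA : IdealHomog A) (hsat : IdealSaturated A) {L : MvPolynomial ι K} (hL : L ∈ 𝒜 1)
    (hLA : ∀ P ∈ zeroLocusI A, ¬ vanishAt L P) :
    ∃ N, ∀ d, N ≤ d → hilbertFn A d = hilbertFn A N := by
  obtain ⟨N, hN⟩ := exists_mulQuot_surjective hA hL hLA
  refine ⟨N, fun d hd => ?_⟩
  induction d, hd using Nat.le_induction with
  | base => rfl
  | succ d hd ih => rw [hilbertFn_succ_eq hA hsat hL hLA (hN d hd), ih]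

/-- The Hilbert functions of `A ⊓ B`, `A` and `B` do not change from `d` to `d + 1`, so by
Mayer–Vietoris neither does that of `A ⊔ B`. -/
theorem mulQuot_sup_injective [IsAlgClosed K] [Finite ι] {A B : Ideal (MvPolynomial ι K)}
    (hA : IdealHomog A) (hAsat : IdealSaturated A) (hB : IdealHomog B) (hBsat : IdealSaturated B)
    {L : MvPolynomial ι K} (hL : L ∈ 𝒜 1) (hLA : ∀ P ∈ zeroLocusI A, ¬ vanishAt L P)
    (hLB : ∀ P ∈ zeroLocusI B, ¬ vanishAt L P) {d : ℕ}
    (h : Function.Surjective (mulQuot (A ⊓ B) hL d)) :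
    Function.Injective (mulQuot (A ⊔ B) hL d) := by
  have hLAB : ∀ P ∈ zeroLocusI (A ⊓ B), ¬ vanishAt L P := fun P hP =>
    (zeroLocusI_inf_subset A B hP).elim (hLA P) (hLB P)
  have hAB := hilbertFn_succ_eq (hA.inf hB) (hAsat.inf hBsat) hL hLAB h
  have hA' := hilbertFn_succ_eq hA hAsat hL hLA (mulQuot_surjective_of_le inf_le_left hL h)
  have hB' := hilbertFn_succ_eq hB hBsat hL hLB (mulQuot_surjective_of_le inf_le_right hL h)
  have hMV := hilbertFn_inf_add_hilbertFn_sup hA hB d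
  have hMV' := hilbertFn_inf_add_hilbertFn_sup hA hB (d + 1)
  exact (LinearMap.injective_iff_surjective_of_finrank_eq_finrank
    (show hilbertFn (A ⊔ B) d = hilbertFn (A ⊔ B) (d + 1) by omega)).mpr
    (mulQuot_surjective_of_le (inf_le_left.trans le_sup_left) hL h)

theorem mem_of_mem_saturation_of_injective {A : Ideal (MvPolynomial ι K)} {L : MvPolynomial ι K}
    (hL : L ∈ 𝒜 1) (h : ∀ d, 1 ≤ d → Function.Injective (mulQuot A hL d))
    {f : MvPolynomial ι K} (hf : f ∈ 𝒜 1) (hfA : f ∈ saturation A) : f ∈ A := by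
  obtain ⟨N, hN⟩ := hfA
  have key : ∀ n k, 1 ≤ k → ∀ g ∈ 𝒜 k, L ^ n * g ∈ A → g ∈ A := by
    intro n
    induction n with
    | zero => intro k _ g _ hg; simpa using hg
    | succ n ih =>
      intro k hk g hg hLg
      refine (mulQuot_injective_iff hL).mp (h k hk) g hg (ih (k + 1) (by omega) _
        (add_comm 1 k ▸ SetLike.mul_mem_graded hL hg) ?_)
      rwa [pow_succ, mul_assoc] at hLg
  exact key N 1 le_rfl f hf (hN _ (by simpa using SetLike.pow_mem_graded N hL))

section LinearForms

variable [Fintype ι] [DecidableEq ι]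

theorem eval_dualToPoly (φ : Module.Dual K (ι → K)) (x : ι → K) :
    eval x (dualToPoly φ) = φ x := by
  conv_rhs => rw [← Finset.univ_sum_single x]
  simp only [dualToPoly, map_sum, smul_eval, eval_X]
  refine Finset.sum_congr rfl fun i _ => ?_
  rw [mul_comm, ← smul_eq_mul, ← map_smul, ← Pi.single_smul, smul_eq_mul, mul_one]

theorem dualToPoly_mem (φ : Module.Dual K (ι → K)) : dualToPoly φ ∈ 𝒜 1 :=
  Submodule.sum_mem _ fun i _ => Submodule.smul_mem _ _ (isHomogeneous_X K i)

theorem exists_dualToPoly_eq {f : MvPolynomial ι K} (hf : f ∈ 𝒜 1) :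
    ∃ φ : Module.Dual K (ι → K), dualToPoly φ = f := by
  rw [homogeneousSubmodule_one_eq_span_X, Submodule.mem_span_range_iff_exists_fun] at hf
  obtain ⟨c, rfl⟩ := hf
  refine ⟨∑ i, c i • LinearMap.proj i, ?_⟩
  simp [dualToPoly, Pi.single_apply]

theorem exists_linearForm_forall_not_vanishAt [Infinite K] {S : Set (Pj K ι)} (hS : S.Finite) :
    ∃ L ∈ 𝒜 1, ∀ P ∈ S, ¬ vanishAt L P := by
  have := hS.to_subtype
  obtain ⟨φ, hφ⟩ := Module.exists_dual_forall_apply_ne_zero (K := K)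
    (fun P : S => P.1.rep) fun P => P.1.rep_nonzero
  exact ⟨dualToPoly φ, dualToPoly_mem φ, fun P hP => by
    simpa [vanishAt, eval_dualToPoly] using hφ ⟨P, hP⟩⟩

theorem mem_linSpanI_iff {A : Ideal (MvPolynomial ι K)} {x : ι → K} :
    x ∈ linSpanI A ↔ ∀ f ∈ A, f ∈ 𝒜 1 → eval x f = 0 := by
  simp only [linSpanI, dualZero, Submodule.mem_iInf, LinearMap.mem_ker, Set.mem_ofPred_eq]
  constructor
  · intro h f hfA hf
    obtain ⟨φ, rfl⟩ := exists_dualToPoly_eq hf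
    rw [eval_dualToPoly]
    exact h φ hfA
  · intro h φ hφ
    rw [← eval_dualToPoly]
    exact h _ hφ (dualToPoly_mem φ)

theorem linSpanI_le_linSpanI {A B : Ideal (MvPolynomial ι K)} (h : ∀ f ∈ 𝒜 1, f ∈ B → f ∈ A) :
    linSpanI A ≤ linSpanI B :=
  fun _ hx => mem_linSpanI_iff.mpr fun f hfB hf => mem_linSpanI_iff.mp hx f (h f hf hfB) hf

theorem linSpanI_inf_le_linSpanI_sup {A B : Ideal (MvPolynomial ι K)} (hA : IdealHomog A)
    (hB : IdealHomog B) : linSpanI A ⊓ linSpanI B ≤ linSpanI (A ⊔ B) := by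
  rintro x ⟨hxA, hxB⟩
  refine mem_linSpanI_iff.mpr fun f hf hf₁ => ?_
  obtain ⟨a, ha, b, hb, rfl⟩ := Submodule.mem_sup.mp hf
  have hab : a + b = homogeneousComponent 1 a + homogeneousComponent 1 b := by
    rw [← map_add, homogeneousComponent_of_mem hf₁, if_pos rfl]
  rw [hab, map_add,
    mem_linSpanI_iff.mp hxA _ (hA a ha 1) (homogeneousComponent_mem 1 a),
    mem_linSpanI_iff.mp hxB _ (hB b hb 1) (homogeneousComponent_mem 1 b), add_zero]

end LinearForms

theorem finrank_homogeneousSubmodule_one [Fintype ι] :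
    Module.finrank K (𝒜 1) = Fintype.card ι := by
  rw [homogeneousSubmodule_one_eq_span_X, finrank_span_eq_card (linearIndependent_X _ _)]

theorem card_sub_gradedDim_one [Fintype ι] (A : Ideal (MvPolynomial ι K)) :
    Fintype.card ι - gradedDim A 1 = hilbertFn A 1 := by
  rw [← finrank_homogeneousSubmodule_one (K := K), ← gradedQuotDim, gradedQuotDim_eq_hilbertFn]

theorem SchemeIdeal.inf {X : Set (Pj K ι)} {A B : Ideal (MvPolynomial ι K)}
    (hA : SchemeIdeal X A) (hB : SchemeIdeal X B) : SchemeIdeal X (A ⊓ B) :=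
  ⟨hA.1.inf hB.1, hA.2.1.inf hB.2.1, le_inf hA.2.2.1 hB.2.2.1,
    (hA.2.2.2.union hB.2.2.2).subset (zeroLocusI_inf_subset A B)⟩

theorem SchemeIdeal.saturation_sup [Finite ι] {X : Set (Pj K ι)} {A B : Ideal (MvPolynomial ι K)}
    (hA : SchemeIdeal X A) (hB : SchemeIdeal X B) : SchemeIdeal X (saturation (A ⊔ B)) :=
  ⟨(hA.1.sup hB.1).saturation, idealSaturated_saturation _,
    hA.2.2.1.trans (le_sup_left.trans (le_saturation _)),
    hA.2.2.2.subset (zeroLocusI_anti (le_sup_left.trans (le_saturation _)))⟩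

end

theorem stmt_15_general {K : Type} [Field K] [IsAlgClosed K]
    {ι : Type} [Fintype ι] [DecidableEq ι]
    (X : Set (Pj K ι))
    (q : Pj K ι)
    (I J : Ideal (MvPolynomial ι K))
    (hI : SchemeIdeal X I) (hJ : SchemeIdeal X J)
    (hne : I ≠ J)
    (hqZ : q.rep ∈ linSpanI I) (hqA : q.rep ∈ linSpanI J)
    (hminZ : ∀ I' : Ideal (MvPolynomial ι K), SchemeIdeal X I' → I < I' → q.rep ∉ linSpanI I')
    (hminA : ∀ J' : Ideal (MvPolynomial ι K), SchemeIdeal X J' → J < J' → q.rep ∉ linSpanI J') :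
    ∃ N D : ℕ, (∀ d : ℕ, N ≤ d → gradedQuotDim (I ⊓ J) d = D) ∧
      Fintype.card ι - Module.finrank K
        ↥((MvPolynomial.homogeneousSubmodule ι K 1) ⊓ (Submodule.restrictScalars K (I ⊓ J)))
        < D := by
  obtain ⟨hQ, hQsat, -, hQfin⟩ := hI.inf hJ
  obtain ⟨L, hL, hLQ⟩ := exists_linearForm_forall_not_vanishAt hQfin
  have hLI := fun P hP => hLQ P (zeroLocusI_anti inf_le_left hP)
  have hLJ := fun P hP => hLQ P (zeroLocusI_anti inf_le_right hP)
  obtain ⟨N, hN⟩ := exists_hilbertFn_eq hQ hQsat hL hLQ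
  refine ⟨N, hilbertFn (I ⊓ J) N, fun d hd => (gradedQuotDim_eq_hilbertFn _ d).trans (hN d hd), ?_⟩
  rw [← gradedDim, card_sub_gradedDim_one]
  by_contra! h
  have hmono := hilbertFn_monotone hQ hQsat hL hLQ
  have hinj : ∀ d, 1 ≤ d → Function.Injective (mulQuot (I ⊔ J) hL d) := fun d hd =>
    mulQuot_sup_injective hI.1 hI.2.1 hJ.1 hJ.2.1 hL hLI hLJ <|
      (LinearMap.injective_iff_surjective_of_finrank_eq_finrank <|
        (hmono.eq_of_le_of_eventually_eq hN h hd).trans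
          (hmono.eq_of_le_of_eventually_eq hN h (by omega)).symm).mp
      (mulQuot_injective hQ hQsat hL hLQ d)
  have hq : q.rep ∈ linSpanI (saturation (I ⊔ J)) :=
    linSpanI_le_linSpanI (fun f hf hfs => mem_of_mem_saturation_of_injective hL hinj hf hfs)
      (linSpanI_inf_le_linSpanI_sup hI.1 hJ.1 ⟨hqZ, hqA⟩)
  have hIsat : I ≤ saturation (I ⊔ J) := le_sup_left.trans (le_saturation _)
  rcases hIsat.lt_or_eq with hlt | heq
  · exact hminZ _ (hI.saturation_sup hJ) hlt hq
  · have hJI : J ≤ I := (le_sup_right.trans (le_saturation _)).trans heq.ge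
    exact hminA I hI (hJI.lt_of_ne hne.symm) hqZ

/-- Let `X ⊂ ℙ^r` be an integral non-degenerate projective variety
(char 0, algebraically closed field), `b ≥ 2`, and `q ∈ ℙ^r`.  Suppose `Z` and `A` are
zero-dimensional subschemes of `X` (encoded by their saturated homogeneous ideals `I`
and `J`) with `Z ≠ A`, `q ∈ ⟨Z⟩ ∩ ⟨A⟩`, `q ∉ ⟨Z'⟩` for every proper subscheme `Z' ⊊ Z`
and `q ∉ ⟨A'⟩` for every proper subscheme `A' ⊊ A`.  Then `h^1(ℙ^r, I_{Z∪A}(1)) > 0`: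
writing `Q = I ⊓ J` for the ideal of `Z ∪ A`, the degree of `Z ∪ A` (the eventual value
`D` of the Hilbert function of `Q`) exceeds the number of linear conditions that `Z ∪ A`
imposes on hyperplanes. -/
theorem stmt_15 {K : Type} [Field K] [IsAlgClosed K] [CharZero K]
    {ι : Type} [Fintype ι] [DecidableEq ι] {b : ℕ} (hb : 2 ≤ b)
    (X : Set (Pj K ι)) (hXcl : IsZClosed X) (hXirr : IsZIrred X) (hXnd : Nondegenerate X)
    (q : Pj K ι)
    (I J : Ideal (MvPolynomial ι K))
    (hI : SchemeIdeal X I) (hJ : SchemeIdeal X J)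
    (hne : I ≠ J)
    (hqZ : q.rep ∈ linSpanI I) (hqA : q.rep ∈ linSpanI J)
    (hminZ : ∀ I' : Ideal (MvPolynomial ι K), SchemeIdeal X I' → I < I' → q.rep ∉ linSpanI I')
    (hminA : ∀ J' : Ideal (MvPolynomial ι K), SchemeIdeal X J' → J < J' → q.rep ∉ linSpanI J') :
    ∃ N D : ℕ, (∀ d : ℕ, N ≤ d → gradedQuotDim (I ⊓ J) d = D) ∧
      Fintype.card ι - Module.finrank K
        ↥((MvPolynomial.homogeneousSubmodule ι K 1) ⊓ (Submodule.restrictScalars K (I ⊓ J)))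
        < D :=
  stmt_15_general X q I J hI hJ hne hqZ hqA hminZ hminA

end SecantPaper
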